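/- arXiv:2309.16443 — 3 statements merged into one kernel-verified Lean document; each statement's English description precedes it below -/
import Mathlib

section
/- Let Y be a discrete random variable such that for all nonnegative integers y ≥ θ, P(Y = y) = (φ/(1+φ)) [(θ/y)^α − (θ/(y+1))^α], with φ > 0, θ > 0, α > 0. If α ≤ n (for a positive integer n), then the n-th moment E(Y^n) = ∑_y y^n P(Y=y) is infinite. -/
/-!
On the tail, `y ^ n ≥ y ^ α`, and `y ^ α ((θ/y)^α - (θ/(y+1))^α) = θ^α (1 - (y/(y+1))^α)`.
Since `1 - t ^ α ≥ min α 1 · (1 - t)` on `[0, 1]` (Bernoulli for `α ≤ 1`, `t ^ α ≤ t` for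
`α ≥ 1`), the `n`-th moment terms dominate a positive multiple of `1 / (y + 1)`, so the
moment series diverges with the harmonic series.
-/

open Filter

lemma min_one_mul_one_sub_le_one_sub_rpow {t α : ℝ} (ht₀ : 0 ≤ t) (ht₁ : t ≤ 1) (hα : 0 ≤ α) :
    min α 1 * (1 - t) ≤ 1 - t ^ α := by
  rcases le_total α 1 with hα₁ | hα₁
  · have := rpow_one_add_le_one_add_mul_self (s := t - 1) (by linarith) hα hα₁
    rw [add_sub_cancel] at this
    rw [min_eq_left hα₁]
    linarith
  · have := Real.rpow_le_rpow_of_exponent_ge' ht₀ ht₁ zero_le_one hα₁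
    rw [Real.rpow_one] at this
    rw [min_eq_right hα₁]
    linarith

lemma rpow_mul_sub_div_rpow {θ y : ℝ} (hθ : 0 ≤ θ) (hy : 0 < y) (α : ℝ) :
    y ^ α * ((θ / y) ^ α - (θ / (y + 1)) ^ α) = θ ^ α * (1 - (y / (y + 1)) ^ α) := by
  have hy₁ : 0 < y + 1 := by linarith
  rw [Real.div_rpow hθ hy.le, Real.div_rpow hθ hy₁.le, Real.div_rpow hy.le hy₁.le]
  have := (Real.rpow_pos_of_pos hy α).ne'
  field_simp

lemma min_one_div_add_one_le_one_sub_rpow_div {y : ℝ} (hy : 0 ≤ y) {α : ℝ} (hα : 0 ≤ α) :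
    min α 1 / (y + 1) ≤ 1 - (y / (y + 1)) ^ α := by
  have hy₁ : 0 < y + 1 := by linarith
  have hsub : 1 - y / (y + 1) = 1 / (y + 1) := by field_simp; ring
  calc min α 1 / (y + 1) = min α 1 * (1 - y / (y + 1)) := by rw [hsub, mul_one_div]
    _ ≤ 1 - (y / (y + 1)) ^ α :=
      min_one_mul_one_sub_le_one_sub_rpow (by positivity) ((div_le_one hy₁).2 (by linarith)) hα

lemma div_add_one_le_pow_mul_pareto_mass {θ α y : ℝ} (hθ : 0 < θ) (hα : 0 ≤ α) (hy : 1 ≤ y)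
    {n : ℕ} (hαn : α ≤ n) :
    θ ^ α * min α 1 / (y + 1) ≤ y ^ n * ((θ / y) ^ α - (θ / (y + 1)) ^ α) := by
  have hy₀ : 0 < y := by linarith
  have hmass : 0 ≤ (θ / y) ^ α - (θ / (y + 1)) ^ α :=
    sub_nonneg.2 <| Real.rpow_le_rpow (by positivity)
      (div_le_div_of_nonneg_left hθ.le hy₀ (by linarith)) hα
  calc θ ^ α * min α 1 / (y + 1) = θ ^ α * (min α 1 / (y + 1)) := mul_div_assoc _ _ _
    _ ≤ θ ^ α * (1 - (y / (y + 1)) ^ α) := by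
      gcongr
      exact min_one_div_add_one_le_one_sub_rpow_div hy₀.le hα
    _ = y ^ α * ((θ / y) ^ α - (θ / (y + 1)) ^ α) := (rpow_mul_sub_div_rpow hθ.le hy₀ α).symm
    _ ≤ y ^ n * ((θ / y) ^ α - (θ / (y + 1)) ^ α) := by
      gcongr
      rw [← Real.rpow_natCast]
      exact Real.rpow_le_rpow_of_exponent_le hy hαn

lemma Real.not_summable_div_natCast_add_one {c : ℝ} (hc : c ≠ 0) :
    ¬ Summable (fun y : ℕ => c / ((y : ℝ) + 1)) := by
  intro h
  have h₁ : Summable (fun y : ℕ => 1 / ((y + 1 : ℕ) : ℝ)) := by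
    refine (h.mul_left c⁻¹).congr fun y => ?_
    rw [← mul_div_assoc, inv_mul_cancel₀ hc, Nat.cast_succ]
  exact Real.not_summable_one_div_natCast ((summable_nat_add_iff 1).1 h₁)

lemma not_summable_of_eventually_div_add_one_le {f : ℕ → ℝ} {c : ℝ} (hc : 0 < c)
    (h : ∀ᶠ y : ℕ in atTop, c / ((y : ℝ) + 1) ≤ f y) : ¬ Summable f := fun hf =>
  Real.not_summable_div_natCast_add_one hc.ne' <| hf.of_norm_bounded_eventually_nat <|
    h.mono fun y hy => by
      rw [Real.norm_of_nonneg (by positivity)]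
      exact hy

theorem nth_moment_infinite_of_le_general
    (φ θ α : ℝ) (hφ : 0 < φ) (hθ : 0 < θ) (hα : 0 < α)
    (p : ℕ → ℝ)
    (htail : ∀ y : ℕ, θ ≤ (y : ℝ) →
      p y = (φ / (1 + φ)) * ((θ / y) ^ α - (θ / ((y : ℝ) + 1)) ^ α))
    (n : ℕ) (hαn : α ≤ (n : ℝ)) :
    ¬ Summable (fun y : ℕ => (y : ℝ) ^ n * p y) := by
  refine not_summable_of_eventually_div_add_one_le
    (c := φ / (1 + φ) * (θ ^ α * min α 1)) (by positivity) ?_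
  filter_upwards [eventually_ge_atTop ⌈max θ 1⌉₊] with y hy
  have hy' : max θ 1 ≤ y := Nat.ceil_le.1 hy
  rw [htail y (le_of_max_le_left hy'), mul_div_assoc, mul_left_comm]
  gcongr
  exact div_add_one_le_pow_mul_pareto_mass hθ hα.le (le_of_max_le_right hy') hαn

/-- If α ≤ n, the n-th moment of a discrete composite distribution with
Pareto(α,θ) tail is infinite (the defining series is not summable). -/
theorem nth_moment_infinite_of_le
    (φ θ α : ℝ) (hφ : 0 < φ) (hθ : 0 < θ) (hα : 0 < α)
    (p : ℕ → ℝ) (hnonneg : ∀ y : ℕ, 0 ≤ p y)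
    (htail : ∀ y : ℕ, θ ≤ (y : ℝ) →
      p y = (φ / (1 + φ)) * ((θ / y) ^ α - (θ / ((y : ℝ) + 1)) ^ α))
    (n : ℕ) (hn : 1 ≤ n) (hαn : α ≤ (n : ℝ)) :
    ¬ Summable (fun y : ℕ => (y : ℝ) ^ n * p y) :=
  nth_moment_infinite_of_le_general φ θ α hφ hθ hα p htail n hαn
end

section
/- Suppose Y is a discrete random variable with θ ≤ 1, so P(Y=0) = [1 + φ(1−θ^α)]/(1+φ) and P(Y=y) = φ[(θ/y)^α − (θ/(y+1))^α]/(1+φ) for positive integers y, with φ > 0, 0 < θ ≤ 1, α > 1. Then E(Y) = (φ θ^α/(1+φ)) ζ(α), where ζ is the Riemann zeta function. -/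
/-!
Writing the tail as `P(Y ≥ n) = φ/(1+φ) · (θ/n)^α` for `n ≥ 1`, summation by parts gives
`E(Y) = ∑_{n ≥ 1} P(Y ≥ n)`, and the boundary term `N · P(Y ≥ N) ∝ N^{1-α}` vanishes because
`α > 1`. The tail sum is `φθ^α/(1+φ) · ∑_{n ≥ 1} n^{-α}`.
-/

open Filter Topology

lemma sum_range_nat_mul_sub_succ (a : ℕ → ℝ) (N : ℕ) :
    ∑ n ∈ Finset.range N, (n : ℝ) * (a n - a (n + 1))
      = ∑ n ∈ Finset.range N, a (n + 1) - N * a N := by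
  induction N with
  | zero => simp
  | succ N ih =>
    rw [Finset.sum_range_succ, Finset.sum_range_succ, ih]
    push_cast
    ring

theorem hasSum_nat_mul_sub_succ {a : ℕ → ℝ} {s : ℝ} (hanti : AntitoneOn a (Set.Ici 1))
    (hlim : Tendsto (fun n : ℕ => n * a n) atTop (𝓝 0))
    (hsum : HasSum (fun n => a (n + 1)) s) :
    HasSum (fun n : ℕ => n * (a n - a (n + 1))) s := by
  have hnonneg : ∀ n : ℕ, 0 ≤ (n : ℝ) * (a n - a (n + 1)) := by
    intro n
    rcases Nat.eq_zero_or_pos n with rfl | hn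
    · simp
    · exact mul_nonneg n.cast_nonneg <| sub_nonneg.2 <|
        hanti (Set.mem_Ici.2 hn) (Set.mem_Ici.2 (by omega)) n.le_succ
  rw [hasSum_iff_tendsto_nat_of_nonneg hnonneg]
  simp only [sum_range_nat_mul_sub_succ]
  simpa using hsum.tendsto_sum_nat.sub hlim

theorem riemannZeta_ofReal_eq_tsum {α : ℝ} (hα : 1 < α) :
    riemannZeta α = ((∑' n : ℕ, ((n : ℝ) + 1) ^ (-α) : ℝ) : ℂ) := by
  rw [zeta_eq_tsum_one_div_nat_add_one_cpow (by simpa using hα), Complex.ofReal_tsum]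
  refine tsum_congr fun n => ?_
  rw [Real.rpow_neg (by positivity), Complex.ofReal_inv,
    Complex.ofReal_cpow (by positivity)]
  push_cast
  ring

/-- Up to the factor `φ/(1+φ)`, the survival function `P(Y ≥ n)` for `n ≥ 1`. -/
noncomputable def paretoTail (θ α : ℝ) (n : ℕ) : ℝ := (θ / n) ^ α

section paretoTail

variable {θ α : ℝ}

lemma paretoTail_antitoneOn (hθ : 0 ≤ θ) (hα : 0 ≤ α) :
    AntitoneOn (paretoTail θ α) (Set.Ici 1) := by
  intro m hm n _ hmn
  have hm' : (0 : ℝ) < m := by exact_mod_cast hm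
  unfold paretoTail
  gcongr

lemma paretoTail_eq (hθ : 0 ≤ θ) (n : ℕ) :
    paretoTail θ α n = θ ^ α * (n : ℝ) ^ (-α) := by
  rw [paretoTail, Real.div_rpow hθ n.cast_nonneg, Real.rpow_neg n.cast_nonneg, div_eq_mul_inv]

lemma tendsto_nat_mul_paretoTail (hθ : 0 ≤ θ) (hα : 1 < α) :
    Tendsto (fun n : ℕ => n * paretoTail θ α n) atTop (𝓝 0) := by
  have hpow : Tendsto (fun n : ℕ => θ ^ α * (n : ℝ) ^ (-(α - 1))) atTop (𝓝 (θ ^ α * 0)) :=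
    ((tendsto_rpow_neg_atTop (by linarith)).comp tendsto_natCast_atTop_atTop).const_mul _
  rw [mul_zero] at hpow
  refine hpow.congr' ?_
  filter_upwards [eventually_gt_atTop 0] with n hn
  have hn' : (0 : ℝ) < n := by exact_mod_cast hn
  rw [paretoTail_eq hθ n, neg_sub, Real.rpow_sub hn', Real.rpow_one, Real.rpow_neg hn'.le]
  field_simp

lemma hasSum_paretoTail_succ (hθ : 0 ≤ θ) (hα : 1 < α) :
    HasSum (fun n => paretoTail θ α (n + 1)) (θ ^ α * ∑' n : ℕ, ((n : ℝ) + 1) ^ (-α)) := by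
  have hzeta : Summable (fun n : ℕ => ((n : ℝ) + 1) ^ (-α)) := by
    simpa using (summable_nat_add_iff 1).2 (Real.summable_nat_rpow.2 (neg_lt_neg_iff.2 hα))
  refine (hzeta.hasSum.mul_left (θ ^ α)).congr_fun fun n => ?_
  rw [paretoTail_eq hθ]
  push_cast
  rfl

end paretoTail

theorem mean_eq_zeta_general
    (φ θ α : ℝ) (hθ0 : 0 < θ) (hα : 1 < α)
    (p : ℕ → ℝ)
    (hy : ∀ y : ℕ, 1 ≤ y →
      p y = φ * ((θ / y) ^ α - (θ / ((y : ℝ) + 1)) ^ α) / (1 + φ)) :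
    ((∑' y : ℕ, (y : ℝ) * p y : ℝ) : ℂ)
      = ((φ * θ ^ α / (1 + φ) : ℝ) : ℂ) * riemannZeta (α : ℂ) := by
  have hterm : ∀ n : ℕ, (n : ℝ) * p n
      = φ / (1 + φ) * (n * (paretoTail θ α n - paretoTail θ α (n + 1))) := by
    intro n
    rcases Nat.eq_zero_or_pos n with rfl | hn
    · simp
    · rw [hy n hn, paretoTail, paretoTail]
      push_cast
      ring
  have hmean := ((hasSum_nat_mul_sub_succ (paretoTail_antitoneOn hθ0.le (by linarith))
    (tendsto_nat_mul_paretoTail hθ0.le hα) (hasSum_paretoTail_succ hθ0.le hα)).mul_left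
      (φ / (1 + φ))).congr_fun hterm
  rw [hmean.tsum_eq, riemannZeta_ofReal_eq_tsum hα]
  push_cast
  ring

/-- With θ ≤ 1 and α > 1, the mean of the weighted discrete composite
distribution with Pareto tail equals (φθ^α/(1+φ)) ζ(α). -/
theorem mean_eq_zeta
    (φ θ α : ℝ) (hφ : 0 < φ) (hθ0 : 0 < θ) (hθ : θ ≤ 1) (hα : 1 < α)
    (p : ℕ → ℝ)
    (h0 : p 0 = (1 + φ * (1 - θ ^ α)) / (1 + φ))
    (hy : ∀ y : ℕ, 1 ≤ y →
      p y = φ * ((θ / y) ^ α - (θ / ((y : ℝ) + 1)) ^ α) / (1 + φ)) :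
    ((∑' y : ℕ, (y : ℝ) * p y : ℝ) : ℂ)
      = ((φ * θ ^ α / (1 + φ) : ℝ) : ℂ) * riemannZeta (α : ℂ) :=
  mean_eq_zeta_general φ θ α hθ0 hα p hy
end

section
/- With θ ≤ 1, φ > 0 and α = 2, the mean of the weighted discrete composite distribution with Pareto tail equals π² φ θ² / (6(1+φ)). -/
/-!
Writing `Y` for the variable with pmf `p`, summation by parts turns the mean into the tail sum
`∑ₙ P(Y > n)`, the boundary term `n P(Y > n)` vanishing in the limit. The Pareto tail is
`P(Y > n) = C / (n + 1)²` with `C = φθ² / (1 + φ)`, so the mean is `C ζ(2)`.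
-/

open Filter Topology Finset Real

theorem sum_range_succ_mul_sub_succ {R : Type*} [CommRing R] (F : ℕ → R) (N : ℕ) :
    ∑ n ∈ range N, ((n : R) + 1) * (F n - F (n + 1)) = ∑ n ∈ range N, F n - N * F N := by
  induction N with
  | zero => simp
  | succ N ih => rw [sum_range_succ, ih, sum_range_succ]; push_cast; ring

theorem hasSum_succ_mul_sub_succ_of_antitone {F : ℕ → ℝ} {s : ℝ} (hF : Antitone F)
    (hs : HasSum F s) (hlim : Tendsto (fun n : ℕ => (n : ℝ) * F n) atTop (𝓝 0)) :
    HasSum (fun n : ℕ => ((n : ℝ) + 1) * (F n - F (n + 1))) s := by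
  have hnonneg (n : ℕ) : 0 ≤ ((n : ℝ) + 1) * (F n - F (n + 1)) :=
    mul_nonneg (by positivity) (sub_nonneg.2 (hF n.le_succ))
  rw [hasSum_iff_tendsto_nat_of_nonneg hnonneg]
  simp_rw [sum_range_succ_mul_sub_succ]
  simpa using hs.tendsto_sum_nat.sub hlim

theorem hasSum_one_div_succ_sq : HasSum (fun n : ℕ => 1 / ((n : ℝ) + 1) ^ 2) (π ^ 2 / 6) := by
  simpa using (hasSum_nat_add_iff' 1).2 hasSum_zeta_two

theorem antitone_one_div_succ_sq : Antitone fun n : ℕ => 1 / ((n : ℝ) + 1) ^ 2 :=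
  fun _ _ h => one_div_le_one_div_of_le (by positivity) (by gcongr)

theorem tendsto_mul_one_div_succ_sq :
    Tendsto (fun n : ℕ => (n : ℝ) * (1 / ((n : ℝ) + 1) ^ 2)) atTop (𝓝 0) := by
  refine squeeze_zero (fun n => by positivity) (fun n => ?_)
    tendsto_one_div_add_atTop_nhds_zero_nat
  rw [mul_one_div, div_le_div_iff₀ (by positivity) (by positivity)]
  nlinarith

theorem hasSum_succ_mul_one_div_sq_sub :
    HasSum (fun n : ℕ => ((n : ℝ) + 1) * (1 / ((n : ℝ) + 1) ^ 2 - 1 / ((n : ℝ) + 2) ^ 2))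
      (π ^ 2 / 6) := by
  convert hasSum_succ_mul_sub_succ_of_antitone antitone_one_div_succ_sq hasSum_one_div_succ_sq
    tendsto_mul_one_div_succ_sq using 5
  push_cast; ring

theorem mean_alpha_two_general
    (φ θ : ℝ)
    (p : ℕ → ℝ)
    (hy : ∀ y : ℕ, 1 ≤ y →
      p y = φ * ((θ / y) ^ 2 - (θ / ((y : ℝ) + 1)) ^ 2) / (1 + φ)) :
    (∑' y : ℕ, (y : ℝ) * p y) = Real.pi ^ 2 * φ * θ ^ 2 / (6 * (1 + φ)) := by
  have hterm (n : ℕ) : ((n + 1 : ℕ) : ℝ) * p (n + 1) = φ * θ ^ 2 / (1 + φ) *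
      (((n : ℝ) + 1) * (1 / ((n : ℝ) + 1) ^ 2 - 1 / ((n : ℝ) + 2) ^ 2)) := by
    rw [hy (n + 1) n.succ_pos, div_pow, div_pow]
    push_cast
    ring
  have hmean : HasSum (fun y : ℕ => (y : ℝ) * p y) (φ * θ ^ 2 / (1 + φ) * (π ^ 2 / 6)) := by
    refine (hasSum_nat_add_iff' 1).1 ?_
    simp only [hterm, range_one, sum_singleton, Nat.cast_zero, zero_mul, sub_zero]
    exact hasSum_succ_mul_one_div_sq_sub.mul_left _
  rw [hmean.tsum_eq, mul_comm 6, ← div_div]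
  ring

/-- With θ ≤ 1, φ > 0 and α = 2, the mean equals π² φ θ² / (6(1+φ)). -/
theorem mean_alpha_two
    (φ θ : ℝ) (hφ : 0 < φ) (hθ0 : 0 < θ) (hθ : θ ≤ 1)
    (p : ℕ → ℝ)
    (h0 : p 0 = (1 + φ * (1 - θ ^ 2)) / (1 + φ))
    (hy : ∀ y : ℕ, 1 ≤ y →
      p y = φ * ((θ / y) ^ 2 - (θ / ((y : ℝ) + 1)) ^ 2) / (1 + φ)) :
    (∑' y : ℕ, (y : ℝ) * p y) = Real.pi ^ 2 * φ * θ ^ 2 / (6 * (1 + φ)) :=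
  mean_alpha_two_general φ θ p hy
end
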